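/- Let n ≥ 3, k ≥ 0, let t ≥ 1, and let C_0 = {(x_α,y_α) : 1 ≤ α ≤ 2t+1} be an alternating cycle in the crown S_n^k satisfying the Matching Conditions, where s_α denotes the size of the pair (x_α,y_α). Then the down-set D(C_0) = {(x,y) incomparable : x_α ⪯ x ⪯ y ⪯ y_α for some α} has cardinality Σ_{α=1}^{2t+1} s_α(s_α+1)/2, and D(C_0) is an independent set in G_n^k. -/

import Mathlib

/-!
Measure positions clockwise from `x₀`. The order conditions place the arcs `[x_α, y_α]` one
after another around the circle, pairwise disjoint, so `D(C₀)` is the disjoint union of the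
sets of pairs inside the `(x_α, y_α)`, and an arc of size `s + 1` contains `(s + 1)(s + 2)/2`
pairs. For independence, the matching pairs `(x_α, y_{α+t})` of size `k + 1` show that any two
of these arcs fit inside a common arc of size at most `k + 1` (from `x_a` to `y_b`, or wrapping
past `x₀` from `x_b` to `y_a`), and two pairs inside such an arc are never adjacent.
-/

namespace CrownPaper

/-- Indices of the crown `S_n^k` live in `ZMod (n+k)`. The minimal element `a_i` is
incomparable to the maximal element `b_j` iff `(j - i) mod (n+k) ≤ k`. -/
def Incomp (n k : ℕ) (i j : ZMod (n + k)) : Prop := (j - i).val ≤ k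

/-- `a_i < b_j` in the crown `S_n^k` iff `(j - i) mod (n+k) > k`. -/
def CompLt (n k : ℕ) (i j : ZMod (n + k)) : Prop := k < (j - i).val

/-- A pair `(a_i, b_j)` is recorded as its pair of indices. -/
abbrev Pair (n k : ℕ) := ZMod (n + k) × ZMod (n + k)

/-- `(a_i, b_j)` is an incomparable (critical) pair. -/
def IsIncPair (n k : ℕ) (p : Pair n k) : Prop := Incomp n k p.1 p.2

/-- Adjacency in the graph `G_n^k` of critical pairs: `(a_i,b_j)` and `(a_p,b_q)` are
adjacent iff `a_i < b_q` and `a_p < b_j` in `S_n^k`. -/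
def Adj (n k : ℕ) (p q : Pair n k) : Prop :=
  CompLt n k p.1 q.2 ∧ CompLt n k q.1 p.2

/-- An independent set of critical pairs in `G_n^k`. -/
def Indep (n k : ℕ) (S : Set (Pair n k)) : Prop :=
  (∀ p ∈ S, IsIncPair n k p) ∧ ∀ p ∈ S, ∀ q ∈ S, ¬ Adj n k p q

/-- A set of pairs is reversible when some linear extension of the crown (encoded as an
injective map into `ℕ` on the disjoint union `A ⊕ B` preserving all strict comparabilities
`a_i < b_j`) puts `a` above `b` for every pair `(a,b)` of the set. -/
def Reversible (n k : ℕ) (S : Set (Pair n k)) : Prop :=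
  ∃ f : (ZMod (n + k)) ⊕ (ZMod (n + k)) → ℕ,
    Function.Injective f ∧
    (∀ i j : ZMod (n + k), CompLt n k i j → f (Sum.inl i) < f (Sum.inr j)) ∧
    ∀ p ∈ S, f (Sum.inr p.2) < f (Sum.inl p.1)

/-- The down-set `D(C₀)` of an alternating cycle: all incomparable pairs contained in
some `(x_α, y_α)` (measuring containment along the clockwise arc from `x_α`). -/
def DownSet (n k t : ℕ) (x y : ZMod (2 * t + 1) → ZMod (n + k)) : Set (Pair n k) :=
  {p | IsIncPair n k p ∧ ∃ α : ZMod (2 * t + 1),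
    (p.1 - x α).val ≤ (p.2 - x α).val ∧ (p.2 - x α).val ≤ (y α - x α).val}

open Finset

section ZModSub

variable {N : ℕ} [NeZero N]

theorem _root_.ZMod.val_sub_of_lt {a b : ZMod N} (h : a.val < b.val) :
    (a - b).val = a.val + N - b.val := by
  have hsum : (a - b + b).val = a.val := by rw [sub_add_cancel]
  by_cases hN : N ≤ (a - b).val + b.val
  · rw [ZMod.val_add_of_le hN] at hsum
    omega
  · rw [ZMod.val_add_of_lt (by omega)] at hsum
    omega

theorem val_sub_cases (o p q : ZMod N) :
    (q - o).val ≤ (p - o).val ∧ (p - q).val = (p - o).val - (q - o).val ∨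
      (p - o).val < (q - o).val ∧ (p - q).val = (p - o).val + N - (q - o).val := by
  rw [← sub_sub_sub_cancel_right p q o]
  rcases le_or_gt (q - o).val (p - o).val with h | h
  · exact .inl ⟨h, ZMod.val_sub h⟩
  · exact .inr ⟨h, ZMod.val_sub_of_lt h⟩

end ZModSub

/-- The pair `p = (a_i, b_j)` lies in the pair `r`: `r.1 ⪯ i ⪯ j ⪯ r.2` clockwise. -/
def InArc (n k : ℕ) (p r : Pair n k) : Prop :=
  (p.1 - r.1).val ≤ (p.2 - r.1).val ∧ (p.2 - r.1).val ≤ (r.2 - r.1).val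

instance (n k : ℕ) : DecidableRel (InArc n k) := fun _ _ => by
  unfold InArc
  infer_instance

section Arc

variable {n k : ℕ} [NeZero (n + k)]

theorem inArc_iff (o : ZMod (n + k)) {p r : Pair n k} (hr : (r.1 - o).val ≤ (r.2 - o).val) :
    InArc n k p r ↔ (r.1 - o).val ≤ (p.1 - o).val ∧ (p.1 - o).val ≤ (p.2 - o).val ∧
      (p.2 - o).val ≤ (r.2 - o).val := by
  have h₁ := val_sub_cases o p.1 r.1
  have h₂ := val_sub_cases o p.2 r.1
  have h₃ := val_sub_cases o r.2 r.1
  have := (p.1 - o).val_lt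
  have := (p.2 - o).val_lt
  have := (r.2 - o).val_lt
  unfold InArc
  omega

theorem InArc.trans {p q r : Pair n k} (hpq : InArc n k p q) (hqr : InArc n k q r) :
    InArc n k p r := by
  have hr : (r.1 - r.1).val ≤ (r.2 - r.1).val := by simp
  have hq := (inArc_iff r.1 hr).1 hqr
  have hp := (inArc_iff r.1 hq.2.1).1 hpq
  exact (inArc_iff r.1 hr).2 ⟨hq.1.trans hp.1, hp.2.1, hp.2.2.trans hq.2.2⟩

theorem isIncPair_of_inArc {p r : Pair n k} (hr : (r.2 - r.1).val ≤ k) (hp : InArc n k p r) :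
    IsIncPair n k p := by
  have := val_sub_cases r.1 p.2 p.1
  unfold IsIncPair Incomp
  unfold InArc at hp
  omega

theorem not_adj_of_inArc {p q r : Pair n k} (hr : (r.2 - r.1).val ≤ k) (hp : InArc n k p r)
    (hq : InArc n k q r) : ¬ Adj n k p q := by
  have h₁ := val_sub_cases r.1 q.2 p.1
  have h₂ := val_sub_cases r.1 p.2 q.1
  unfold InArc at hp hq
  unfold Adj CompLt
  omega

/-- A pair in `r` at positions `i ≤ j` of the arc is sent to `(i, j + 1)`, a strictly ordered
pair in `range (s + 2)` where `s + 1` is the size of `r`. -/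
theorem card_filter_inArc (r : Pair n k) :
    #{p | InArc n k p r} = ((r.2 - r.1).val + 1) * ((r.2 - r.1).val + 2) / 2 := by
  set s := (r.2 - r.1).val with hs
  have hsN : s < n + k := ZMod.val_lt _
  have hval (i : ℕ) (hi : i ≤ s) : (r.1 + (i : ZMod (n + k)) - r.1).val = i := by
    rw [add_sub_cancel_left, ZMod.val_cast_of_lt (by omega)]
  calc #{p | InArc n k p r}
      = #{c ∈ range (s + 2) ×ˢ range (s + 2) | c.1 < c.2} := by
        refine card_nbij' (fun p => ((p.1 - r.1).val, (p.2 - r.1).val + 1))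
          (fun c => (r.1 + (c.1 : ZMod (n + k)), r.1 + ((c.2 - 1 : ℕ) : ZMod (n + k))))
          ?_ ?_ ?_ ?_
        · intro p hp
          simp only [mem_coe, mem_filter, mem_univ, true_and, mem_product, mem_range] at hp ⊢
          unfold InArc at hp
          omega
        · intro c hc
          simp only [mem_coe, mem_filter, mem_univ, true_and, mem_product, mem_range] at hc ⊢
          unfold InArc
          rw [hval _ (by omega), hval _ (by omega)]
          omega
        · intro p _
          simp
        · intro c hc
          simp only [mem_coe, mem_filter, mem_product, mem_range] at hc
          simp only [hval _ (show c.1 ≤ s by omega), hval _ (show c.2 - 1 ≤ s by omega)]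
          exact Prod.ext rfl (Nat.sub_add_cancel (by omega))
    _ = (s + 2).choose 2 := by rw [card_product_filter_lt, card_range]
    _ = (s + 1) * (s + 2) / 2 := by rw [Nat.choose_two_right, mul_comm]; rfl

end Arc

theorem lt_of_forall_lt_succ {X Y : ℕ → ℕ} {m a b : ℕ} (hle : ∀ β, X β ≤ Y β)
    (hlt : ∀ β < m, Y β < X (β + 1)) (hab : a < b) (hbm : b ≤ m) : Y a < X b := by
  induction b, hab using Nat.le_induction with
  | base => exact hlt a hbm
  | succ b hab ih => exact (ih (by omega)).trans_le ((hle b).trans_lt (hlt b hbm)).le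

/-- Positions `X β`, `Y β` of `x_β`, `y_β` (`β = 0, …, 2t`) measured clockwise from `x₀`. The
Matching Conditions say that `(x_β, y_{β+t})` has size `k + 1`; for `β > t` the index `β + t`
wraps to `β - (t + 1)` and this arc passes `x₀`, which turns the condition into
`X β - Y (β - (t + 1)) = n`. -/
structure IsMatchedChain (n k t : ℕ) (X Y : ℕ → ℕ) : Prop where
  le : ∀ β, X β ≤ Y β
  lt_succ : ∀ β < 2 * t, Y β < X (β + 1)
  match_low : ∀ β ≤ t, Y (β + t) = X β + k
  match_high : ∀ β, t < β → β ≤ 2 * t → X β = Y (β - (t + 1)) + n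

namespace IsMatchedChain

variable {n k t : ℕ} {X Y : ℕ → ℕ}

theorem lt (h : IsMatchedChain n k t X Y) {a b : ℕ} (hab : a < b) (hb : b ≤ 2 * t) :
    Y a < X b :=
  lt_of_forall_lt_succ h.le h.lt_succ hab hb

theorem mono (h : IsMatchedChain n k t X Y) {a b : ℕ} (hab : a ≤ b) (hb : b ≤ 2 * t) :
    X a ≤ X b ∧ Y a ≤ Y b := by
  rcases hab.eq_or_lt with rfl | hab
  · exact ⟨le_rfl, le_rfl⟩
  · have := h.lt hab hb
    have := h.le a
    have := h.le b
    omega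

/-- The arcs `[X a, Y a]` and `[X b, Y b]` lie in an arc of size at most `k + 1`: either in
`[X a, Y b]`, or in the arc from `X b` to `Y a` through `x₀`, of size `Y a + n + k - X b + 1`. -/
theorem cover (h : IsMatchedChain n k t X Y) {a b : ℕ} (hab : a ≤ b) (hb : b ≤ 2 * t) :
    Y b ≤ X a + k ∨ a < b ∧ Y a + n ≤ X b := by
  by_cases hbt : b ≤ a + t
  · left
    rcases le_or_gt t b with htb | htb
    · have hmatch := h.match_low (b - t) (by omega)
      rw [Nat.sub_add_cancel htb] at hmatch
      have := (h.mono (show b - t ≤ a by omega) (by omega)).1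
      omega
    · have hmatch := h.match_low 0 (Nat.zero_le t)
      rw [zero_add] at hmatch
      have := (h.mono (Nat.zero_le a) (by omega)).1
      have := (h.mono htb.le (by omega)).2
      omega
  · right
    have hmatch := h.match_high (a + t + 1) (by omega) (by omega)
    rw [show a + t + 1 - (t + 1) = a by omega] at hmatch
    have := (h.mono (show a + t + 1 ≤ b by omega) hb).1
    exact ⟨by omega, by omega⟩

end IsMatchedChain

section Cycle

variable {n k t : ℕ} {x y : ZMod (2 * t + 1) → ZMod (n + k)}

theorem cycle_lt_succ
    (horder2 : ∀ α : ZMod (2 * t + 1), α.val < 2 * t →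
      (y α - x 0).val < (x (α + 1) - x 0).val)
    {β : ℕ} (hβ : β < 2 * t) :
    (y β - x 0).val < (x ((β + 1 : ℕ) : ZMod (2 * t + 1)) - x 0).val := by
  rw [Nat.cast_succ]
  exact horder2 β (by rwa [ZMod.val_cast_of_lt (by omega)])

theorem cycle_lt (horder1 : ∀ α, (x α - x 0).val ≤ (y α - x 0).val)
    (horder2 : ∀ α : ZMod (2 * t + 1), α.val < 2 * t →
      (y α - x 0).val < (x (α + 1) - x 0).val)
    {a b : ℕ} (hab : a < b) (hb : b ≤ 2 * t) :
    (y a - x 0).val < (x b - x 0).val :=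
  lt_of_forall_lt_succ (X := fun β : ℕ => (x β - x 0).val) (fun β => horder1 β)
    (fun _ => cycle_lt_succ horder2) hab hb

theorem isMatchedChain_of_cycle [NeZero (n + k)]
    (horder1 : ∀ α, (x α - x 0).val ≤ (y α - x 0).val)
    (horder2 : ∀ α : ZMod (2 * t + 1), α.val < 2 * t →
      (y α - x 0).val < (x (α + 1) - x 0).val)
    (hmatch : ∀ α : ZMod (2 * t + 1), (y (α + (t : ZMod (2 * t + 1))) - x α).val = k) :
    IsMatchedChain n k t (fun β : ℕ => (x β - x 0).val) (fun β : ℕ => (y β - x 0).val) := by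
  have hle (β : ℕ) : (x β - x 0).val ≤ (y β - x 0).val := horder1 β
  have hchain {a b : ℕ} (hab : a < b) (hb : b ≤ 2 * t) := cycle_lt horder1 horder2 hab hb
  refine ⟨hle, fun _ => cycle_lt_succ horder2, fun β hβ => ?_, fun β hβ₁ hβ₂ => ?_⟩
  · have hk := hmatch β
    rw [← Nat.cast_add] at hk
    have hXY : (x β - x 0).val ≤ (y ((β + t : ℕ) : ZMod (2 * t + 1)) - x 0).val := by
      rcases (Nat.le_add_right β t).eq_or_lt with hβt | hβt
      · rw [← hβt]
        exact hle β
      · exact ((hle β).trans (hchain hβt (by omega)).le).trans (hle _)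
    have := val_sub_cases (x 0) (y ((β + t : ℕ) : ZMod (2 * t + 1))) (x β)
    omega
  · have hk := hmatch β
    have hwrap : (β : ZMod (2 * t + 1)) + (t : ZMod (2 * t + 1)) =
        ((β - (t + 1) : ℕ) : ZMod (2 * t + 1)) := by
      rw [← Nat.cast_add, show β + t = β - (t + 1) + (2 * t + 1) by omega, Nat.cast_add,
        ZMod.natCast_self, add_zero]
    rw [hwrap] at hk
    have := val_sub_cases (x 0) (y ((β - (t + 1) : ℕ) : ZMod (2 * t + 1))) (x β)
    have := hchain (show β - (t + 1) < β by omega) hβ₂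
    have := (x (β : ZMod (2 * t + 1)) - x 0).val_lt
    omega

theorem downSet_eq_biUnion [NeZero (n + k)] (hinc : ∀ α, Incomp n k (x α) (y α)) :
    DownSet n k t x y = ↑(univ.biUnion fun α => ({p | InArc n k p (x α, y α)} : Finset _)) := by
  ext p
  simp only [mem_coe, mem_biUnion, mem_univ, mem_filter, true_and]
  exact ⟨fun ⟨_, α, hα⟩ => ⟨α, hα⟩,
    fun ⟨α, hα⟩ => ⟨isIncPair_of_inArc (r := (x α, y α)) (hinc α) hα, α, hα⟩⟩

theorem pairwiseDisjoint_inArc [NeZero (n + k)]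
    (horder1 : ∀ α, (x α - x 0).val ≤ (y α - x 0).val)
    (horder2 : ∀ α : ZMod (2 * t + 1), α.val < 2 * t →
      (y α - x 0).val < (x (α + 1) - x 0).val) :
    ((univ : Finset (ZMod (2 * t + 1))) : Set _).PairwiseDisjoint
      fun α => ({p | InArc n k p (x α, y α)} : Finset (Pair n k)) := by
  have key {α β : ZMod (2 * t + 1)} (h : α.val < β.val) (p : Pair n k)
      (hpα : InArc n k p (x α, y α)) (hpβ : InArc n k p (x β, y β)) : False := by
    have hlt := cycle_lt horder1 horder2 h (by have := β.val_lt; omega)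
    simp only [ZMod.natCast_zmod_val] at hlt
    have hα := (inArc_iff (x 0) (horder1 α)).1 hpα
    have hβ := (inArc_iff (x 0) (horder1 β)).1 hpβ
    dsimp only at hα hβ
    omega
  intro α _ β _ hαβ
  rw [Function.onFun, disjoint_filter]
  intro p _ hpα hpβ
  rcases Nat.lt_or_gt_of_ne (ZMod.val_injective _ |>.ne hαβ) with h | h
  · exact key h p hpα hpβ
  · exact key h p hpβ hpα

theorem exists_common_arc [NeZero (n + k)]
    (horder1 : ∀ α, (x α - x 0).val ≤ (y α - x 0).val)
    (horder2 : ∀ α : ZMod (2 * t + 1), α.val < 2 * t →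
      (y α - x 0).val < (x (α + 1) - x 0).val)
    (hmatch : ∀ α : ZMod (2 * t + 1), (y (α + (t : ZMod (2 * t + 1))) - x α).val = k)
    (α β : ZMod (2 * t + 1)) :
    ∃ r : Pair n k, (r.2 - r.1).val ≤ k ∧ InArc n k (x α, y α) r ∧ InArc n k (x β, y β) r := by
  wlog h : α.val ≤ β.val generalizing α β
  · obtain ⟨r, hr, hβ, hα⟩ := this β α (by omega)
    exact ⟨r, hr, hα, hβ⟩
  have H := isMatchedChain_of_cycle horder1 horder2 hmatch
  have hb : β.val ≤ 2 * t := by have := β.val_lt; omega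
  have hcover := H.cover h hb
  have hmono := H.mono h hb
  simp only [ZMod.natCast_zmod_val] at hcover hmono
  have := horder1 α
  have := horder1 β
  have := (y α - x 0).val_lt
  have := (y β - x 0).val_lt
  have := (x α - x 0).val_lt
  have := (x β - x 0).val_lt
  have := val_sub_cases (x 0) (y β) (x α)
  have := val_sub_cases (x 0) (y α) (x α)
  have := val_sub_cases (x 0) (x β) (x α)
  have := val_sub_cases (x 0) (y α) (x β)
  have := val_sub_cases (x 0) (x α) (x β)
  have := val_sub_cases (x 0) (y β) (x β)
  rcases hcover with hcover | hcover
  · refine ⟨(x α, y β), ?_, ?_, ?_⟩ <;> simp only [InArc, sub_self, ZMod.val_zero] <;> omega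
  · obtain ⟨hab, hcover⟩ := hcover
    have hlt := H.lt hab hb
    simp only [ZMod.natCast_zmod_val] at hlt
    refine ⟨(x β, y α), ?_, ?_, ?_⟩ <;> simp only [InArc, sub_self, ZMod.val_zero] <;> omega

end Cycle

theorem downset_card_and_indep_general (n k t : ℕ) (hn : 3 ≤ n)
    (x y : ZMod (2 * t + 1) → ZMod (n + k))
    (hinc : ∀ α : ZMod (2 * t + 1), Incomp n k (x α) (y α))
    (horder1 : ∀ α : ZMod (2 * t + 1), (x α - x 0).val ≤ (y α - x 0).val)
    (horder2 : ∀ α : ZMod (2 * t + 1), α.val < 2 * t →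
      (y α - x 0).val < (x (α + 1) - x 0).val)
    (hmatch : ∀ α : ZMod (2 * t + 1),
      (y (α + (t : ZMod (2 * t + 1))) - x α).val = k) :
    (DownSet n k t x y).ncard =
      ∑ α : ZMod (2 * t + 1), ((y α - x α).val + 1) * ((y α - x α).val + 2) / 2 ∧
    Indep n k (DownSet n k t x y) := by
  have : NeZero (n + k) := ⟨by omega⟩
  refine ⟨?_, fun p hp => hp.1, ?_⟩
  · rw [downSet_eq_biUnion hinc, Set.ncard_coe_finset,
      card_biUnion (pairwiseDisjoint_inArc horder1 horder2)]
    exact sum_congr rfl fun α _ => card_filter_inArc _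
  · rintro p ⟨-, α, hpα : InArc n k p (x α, y α)⟩ q ⟨-, β, hqβ : InArc n k q (x β, y β)⟩
    obtain ⟨r, hr, hαr, hβr⟩ := exists_common_arc horder1 horder2 hmatch α β
    exact not_adj_of_inArc hr (hpα.trans hαr) (hqβ.trans hβr)

/-- for an alternating cycle `C₀` of size `2t+1` satisfying the Matching
Conditions, with `s_α` the size of `(x_α,y_α)`, the down-set `D(C₀)` has cardinality
`∑ s_α (s_α + 1)/2` and is an independent set in `G_n^k`. -/
theorem downset_card_and_indep (n k t : ℕ) (hn : 3 ≤ n) (ht : 1 ≤ t)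
    (x y : ZMod (2 * t + 1) → ZMod (n + k))
    (hinc : ∀ α : ZMod (2 * t + 1), Incomp n k (x α) (y α))
    (hcyc : ∀ α : ZMod (2 * t + 1), CompLt n k (x α) (y (α - 1)))
    (horder1 : ∀ α : ZMod (2 * t + 1), (x α - x 0).val ≤ (y α - x 0).val)
    (horder2 : ∀ α : ZMod (2 * t + 1), α.val < 2 * t →
      (y α - x 0).val < (x (α + 1) - x 0).val)
    (hmatch : ∀ α : ZMod (2 * t + 1),
      (y (α + (t : ZMod (2 * t + 1))) - x α).val = k) :
    (DownSet n k t x y).ncard =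
      ∑ α : ZMod (2 * t + 1), ((y α - x α).val + 1) * ((y α - x α).val + 2) / 2 ∧
    Indep n k (DownSet n k t x y) :=
  downset_card_and_indep_general n k t hn x y hinc horder1 horder2 hmatch

end CrownPaper
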